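/- arXiv:2210.13524 — 2 statements merged into one kernel-verified Lean document; each statement's English description precedes it below -/
import Mathlib

section
/- Let X ⊂ ℂ^N be an irreducible non-degenerate affine variety of dimension n admitting a local parametrization φ: U ⊆ ℂ^n → X such that for every p ∈ U the vector φ(p) is a linear combination of the partial derivatives ∂φ/∂x_1(p), …, ∂φ/∂x_n(p). Then X is a cone whose vertex contains the origin. -/
open scoped BigOperators

namespace Bron

variable (K : Type) [Field K] {σ : Type} [Fintype σ]

/-- A subset of affine space cut out by polynomial equations (Zariski closed). -/
def IsZar (S : Set (σ → K)) : Prop :=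
  ∃ T : Set (MvPolynomial σ K), S = {x | ∀ f ∈ T, MvPolynomial.eval x f = 0}

/-- The Zariski closure of a set. -/
def zcl (S : Set (σ → K)) : Set (σ → K) := ⋂₀ {C | IsZar K C ∧ S ⊆ C}

/-- Irreducibility with respect to Zariski-closed sets. -/
def IsIrr (S : Set (σ → K)) : Prop :=
  S.Nonempty ∧ ∀ C₁ C₂ : Set (σ → K), IsZar K C₁ → IsZar K C₂ →
    S ⊆ C₁ ∪ C₂ → S ⊆ C₁ ∨ S ⊆ C₂

/-- A property `P` holds at a general point of `X`: it holds away from a proper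
Zariski-closed subset. -/
def Generic (X : Set (σ → K)) (P : (σ → K) → Prop) : Prop :=
  ∃ C : Set (σ → K), IsZar K C ∧ ¬ X ⊆ C ∧ ∀ x ∈ X, x ∉ C → P x

/-- Zariski-closed subsets of the space of `k`-tuples of points. -/
def IsZarT (k : ℕ) (S : Set (Fin k → σ → K)) : Prop :=
  ∃ T : Set (MvPolynomial (Fin k × σ) K),
    S = {s | ∀ f ∈ T, MvPolynomial.eval (fun q => s q.1 q.2) f = 0}

/-- A property `P` holds for a general `k`-tuple of points of `X`. -/
def GenericTuple (k : ℕ) (X : Set (σ → K)) (P : (Fin k → σ → K) → Prop) : Prop :=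
  ∃ C : Set (Fin k → σ → K), IsZarT K k C ∧ ¬ {s : Fin k → σ → K | ∀ i, s i ∈ X} ⊆ C ∧
    ∀ s : Fin k → σ → K, (∀ i, s i ∈ X) → s ∉ C → P s

/-- The Krull dimension of (the Zariski closure of) `S`, computed as the Krull
dimension of the poset of irreducible Zariski-closed subsets of its closure. -/
noncomputable def zdim (S : Set (σ → K)) : WithBot ℕ∞ :=
  Order.krullDim {C : Set (σ → K) // IsIrr K C ∧ IsZar K C ∧ C ⊆ zcl K S}

/-- `S` is an affine cone (with vertex containing the origin). -/
def IsCone (S : Set (σ → K)) : Prop := ∀ c : K, ∀ x ∈ S, c • x ∈ S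

/-- `S` is (the affine cone over) a projective cone: there is a vertex point. -/
def IsProjCone (S : Set (σ → K)) : Prop :=
  ∃ v ∈ S, v ≠ 0 ∧ ∀ x ∈ S, ∀ a b : K, a • v + b • x ∈ S

/-- The union of the spans of `k`-tuples of points of `X`. -/
def presecant (k : ℕ) (X : Set (σ → K)) : Set (σ → K) :=
  ⋃ (s : Fin k → σ → K) (_ : ∀ i, s i ∈ X), (Submodule.span K (Set.range s) : Set (σ → K))

/-- The affine cone over the `k`-secant variety of `X`. -/
def secant (k : ℕ) (X : Set (σ → K)) : Set (σ → K) := zcl K (presecant K k X)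

/-- The embedded Zariski tangent space (of the affine cone) at `x`, as a set:
directions annihilated by the differentials of all polynomials vanishing on `X`. -/
def tangentSet (X : Set (σ → K)) (x : σ → K) : Set (σ → K) :=
  {v | ∀ f : MvPolynomial σ K, (∀ y ∈ X, MvPolynomial.eval y f = 0) →
    ∑ i : σ, v i * MvPolynomial.eval x (MvPolynomial.pderiv i f) = 0}

/-- The embedded tangent space at `x` as a linear subspace. -/
def tangent (X : Set (σ → K)) (x : σ → K) : Submodule K (σ → K) :=
  Submodule.span K (tangentSet K X x)

/-- `X` (of projective dimension `n`) is `k`-defective. -/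
def Defective (k n : ℕ) (X : Set (σ → K)) : Prop :=
  zdim K (secant K k X) < ((min (k * (n + 1)) (Fintype.card σ) : ℕ) : WithBot ℕ∞)

/-- `W` is (the cone over) a `(k-1)`-plane spanned by `k` points of `X`. -/
def SpanOfPoints (k : ℕ) (X : Set (σ → K)) (W : Submodule K (σ → K)) : Prop :=
  ∃ s : Fin k → σ → K, (∀ i, s i ∈ X) ∧ W = Submodule.span K (Set.range s) ∧
    Module.finrank K W = k

/-- Generic `k`-identifiability: through a general point of the `k`-secant variety
there passes a unique `(k-1)`-plane spanned by `k` points of `X`. -/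
def Identifiable (k : ℕ) (X : Set (σ → K)) : Prop :=
  Generic K (secant K k X) fun p =>
    ∃! W : Submodule K (σ → K), SpanOfPoints K k X W ∧ p ∈ W

/-- The general `k`-tangential projection of `X` is birational onto its image:
for a general `k`-tuple of points and a general `x ∈ X`, any `y ∈ X` with the same
image (as a projective point) lies on the line of `x` or in the centre. -/
def TauBirational (k : ℕ) (X : Set (σ → K)) : Prop :=
  GenericTuple K k X fun s =>
    Generic K X fun x => ∀ y ∈ X,
      Submodule.mkQ (⨆ i, tangent K X (s i)) y ∈
        Submodule.span K {Submodule.mkQ (⨆ i, tangent K X (s i)) x} →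
      (y ∈ Submodule.span K {x} ∨ y ∈ ⨆ i, tangent K X (s i))

/-- `X` is an `h`-Bronowski variety: `h`-identifiability is equivalent to
birationality of the general `(h-1)`-tangential projection. -/
def Bronowski (k : ℕ) (X : Set (σ → K)) : Prop :=
  Identifiable K k X ↔ TauBirational K (k - 1) X

/-- The locus of points of `X` where the span of the tangent spaces at the `s i`
is tangent to `X`. -/
def tangencyLocus {k : ℕ} (X : Set (σ → K)) (s : Fin k → σ → K) : Set (σ → K) :=
  zcl K {x | x ∈ X ∧ tangent K X x ≤ ⨆ i, tangent K X (s i)}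

/-- The tangential contact locus: the union of the irreducible components of the
tangency locus containing one of the points `s i`. -/
def contactLocus {k : ℕ} (X : Set (σ → K)) (s : Fin k → σ → K) : Set (σ → K) :=
  ⋃₀ {C | Maximal (fun D => IsIrr K D ∧ IsZar K D ∧ D ⊆ tangencyLocus K X s) C ∧ ∃ i, s i ∈ C}

end Bron

section Aux
open MvPolynomial

noncomputable def evalDeriv {N : ℕ} (f : MvPolynomial (Fin N) ℂ) (x : Fin N → ℂ) :
    (Fin N → ℂ) →L[ℂ] ℂ :=
  ∑ i, MvPolynomial.eval x (pderiv i f) • (ContinuousLinearMap.proj i : (Fin N → ℂ) →L[ℂ] ℂ)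

lemma evalDeriv_apply {N : ℕ} (f : MvPolynomial (Fin N) ℂ) (x v : Fin N → ℂ) :
    evalDeriv f x v = ∑ i, MvPolynomial.eval x (pderiv i f) * v i := by
  simp [evalDeriv, ContinuousLinearMap.sum_apply]

lemma hasFDerivAt_mveval {N : ℕ} (f : MvPolynomial (Fin N) ℂ) (x : Fin N → ℂ) :
    HasFDerivAt (fun y : Fin N → ℂ => MvPolynomial.eval y f) (evalDeriv f x) x := by
  induction f using MvPolynomial.induction_on with
  | C a =>
      have h : evalDeriv (C a : MvPolynomial (Fin N) ℂ) x = 0 := by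
        apply ContinuousLinearMap.ext; intro v; simp [evalDeriv_apply]
      rw [h]
      simpa using hasFDerivAt_const a x
  | add p q hp hq =>
      have h : evalDeriv (p + q) x = evalDeriv p x + evalDeriv q x := by
        apply ContinuousLinearMap.ext; intro v
        simp [evalDeriv_apply, Finset.sum_add_distrib, add_mul]
      rw [h]
      exact (hp.add hq).congr_of_eventuallyEq (Filter.Eventually.of_forall fun y => by simp)
  | mul_X p i hp =>
      have hXi : HasFDerivAt (fun y : Fin N → ℂ => y i)
          (ContinuousLinearMap.proj i : (Fin N → ℂ) →L[ℂ] ℂ) x :=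
        (ContinuousLinearMap.proj i : (Fin N → ℂ) →L[ℂ] ℂ).hasFDerivAt
      have hm := hp.mul hXi
      have h : evalDeriv (p * X i) x =
          eval x p • (ContinuousLinearMap.proj i : (Fin N → ℂ) →L[ℂ] ℂ) + x i • evalDeriv p x := by
        apply ContinuousLinearMap.ext; intro v
        simp only [evalDeriv_apply, ContinuousLinearMap.add_apply,
          ContinuousLinearMap.smul_apply, ContinuousLinearMap.proj_apply, smul_eq_mul,
          pderiv_mul, pderiv_X, map_add, map_mul, eval_X, Finset.mul_sum]
        have hs : ∀ j : Fin N, (eval x) ((Pi.single j 1 : Fin N → MvPolynomial (Fin N) ℂ) i)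
            = if j = i then 1 else 0 := by
          intro j; rcases eq_or_ne j i with h|h <;> simp [Pi.single_apply, h]
        simp only [hs]
        have hterm : ∀ j : Fin N,
            ((eval x) ((pderiv j) p) * x i + (eval x) p * (if j = i then 1 else 0)) * v j
            = x i * ((eval x) ((pderiv j) p) * v j) + (if j = i then (eval x) p * v j else 0) := by
          intro j; split <;> ring
        simp only [hterm, Finset.sum_add_distrib, Finset.sum_ite_eq' Finset.univ,
          Finset.mem_univ, if_true]
        ring
      rw [h]
      exact hm.congr_of_eventuallyEq (Filter.Eventually.of_forall fun y => by simp)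

noncomputable def euler {N : ℕ} (f : MvPolynomial (Fin N) ℂ) : MvPolynomial (Fin N) ℂ :=
  ∑ i, X i * pderiv i f

lemma eval_euler {N : ℕ} (f : MvPolynomial (Fin N) ℂ) (y : Fin N → ℂ) :
    MvPolynomial.eval y (euler f) = ∑ i, y i * MvPolynomial.eval y (pderiv i f) := by
  simp [euler]

lemma euler_vanishes_at_param {n N : ℕ}
    (U : Set (Fin n → ℂ)) (φ : (Fin n → ℂ) → (Fin N → ℂ))
    (hUopen : IsOpen U)
    (hdiff : ∀ p ∈ U, DifferentiableAt ℂ φ p)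
    (hlin : ∀ p ∈ U,
      φ p ∈ Submodule.span ℂ (Set.range fun i : Fin n => fderiv ℂ φ p (Pi.single i 1)))
    (f : MvPolynomial (Fin N) ℂ) (hf : ∀ p ∈ U, MvPolynomial.eval (φ p) f = 0)
    (p : Fin n → ℂ) (hp : p ∈ U) :
    MvPolynomial.eval (φ p) (euler f) = 0 := by
  have hφ := (hdiff p hp).hasFDerivAt
  -- composite has derivative (evalDeriv f (φ p)).comp (fderiv ℂ φ p)
  have hcomp : HasFDerivAt (fun q => MvPolynomial.eval (φ q) f)
      ((evalDeriv f (φ p)).comp (fderiv ℂ φ p)) p :=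
    (hasFDerivAt_mveval f (φ p)).comp p hφ
  -- the composite is locally zero
  have hzero : HasFDerivAt (fun q => MvPolynomial.eval (φ q) f)
      (0 : (Fin n → ℂ) →L[ℂ] ℂ) p := by
    have : (fun q => MvPolynomial.eval (φ q) f) =ᶠ[nhds p] fun _ => (0:ℂ) := by
      filter_upwards [hUopen.mem_nhds hp] with q hq using hf q hq
    exact (hasFDerivAt_const (0:ℂ) p).congr_of_eventuallyEq this
  have hD : (evalDeriv f (φ p)).comp (fderiv ℂ φ p) = 0 := hcomp.unique hzero
  -- linear functional vanishing on the partials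
  set L : (Fin N → ℂ) →ₗ[ℂ] ℂ := (evalDeriv f (φ p)).toLinearMap with hL
  have hker : Submodule.span ℂ (Set.range fun i : Fin n => fderiv ℂ φ p (Pi.single i 1))
      ≤ LinearMap.ker L := by
    rw [Submodule.span_le]
    rintro - ⟨i, rfl⟩
    have := congrArg (fun (T : (Fin n → ℂ) →L[ℂ] ℂ) => T (Pi.single i 1)) hD
    simpa [LinearMap.mem_ker, L] using this
  have hLφ : L (φ p) = 0 := hker (hlin p hp)
  rw [eval_euler]
  have : L (φ p) = ∑ i, MvPolynomial.eval (φ p) (pderiv i f) * φ p i := by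
    simp [L, evalDeriv_apply]
  rw [this] at hLφ
  rw [← hLφ]
  exact Finset.sum_congr rfl fun i _ => mul_comm _ _

noncomputable def toOne {N : ℕ} (x : Fin N → ℂ) :
    MvPolynomial (Fin N) ℂ →+* Polynomial ℂ :=
  MvPolynomial.eval₂Hom (Polynomial.C : ℂ →+* Polynomial ℂ)
    (fun i => Polynomial.C (x i) * Polynomial.X)

lemma toOne_eval {N : ℕ} (x : Fin N → ℂ) (f : MvPolynomial (Fin N) ℂ) (c : ℂ) :
    Polynomial.eval c (toOne x f) = MvPolynomial.eval (c • x) f := by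
  have : Polynomial.eval c (toOne x f)
      = MvPolynomial.eval₂ ((Polynomial.evalRingHom c).comp Polynomial.C)
        ((Polynomial.evalRingHom c) ∘ fun i => Polynomial.C (x i) * Polynomial.X) f := by
    rw [toOne, MvPolynomial.coe_eval₂Hom]
    exact MvPolynomial.eval₂_comp_left (Polynomial.evalRingHom c) _ _ f
  rw [this]
  rw [show (Polynomial.evalRingHom c).comp Polynomial.C = RingHom.id ℂ by
    ext a; simp]
  rw [← MvPolynomial.eval₂_id]
  congr 1
  funext i
  show Polynomial.eval c (Polynomial.C (x i) * Polynomial.X) = (c • x) i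
  rw [Polynomial.eval_mul, Polynomial.eval_C, Polynomial.eval_X, Pi.smul_apply, smul_eq_mul,
    mul_comm]

open Polynomial in
lemma euler_monomial {N : ℕ} (s : Fin N →₀ ℕ) (a : ℂ) :
    euler (MvPolynomial.monomial s a)
      = MvPolynomial.monomial s (a * ((∑ i, s i : ℕ) : ℂ)) := by
  rw [euler]
  have hterm : ∀ i : Fin N, (X i : MvPolynomial (Fin N) ℂ) * pderiv i (monomial s a)
      = monomial s (a * (s i : ℂ)) := by
    intro i
    rw [pderiv_monomial]
    rcases Nat.eq_zero_or_pos (s i) with h | h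
    · simp [h]
    · rw [MvPolynomial.X, monomial_mul, one_mul]
      congr 1
      rw [add_comm]
      exact congrArg _ (tsub_add_cancel_of_le (Finsupp.single_le_iff.mpr h))
  rw [Finset.sum_congr rfl fun i _ => hterm i]
  rw [← map_sum (monomial s) (fun i => a * (s i : ℂ)) Finset.univ]
  congr 1
  rw [← Finset.mul_sum]
  congr 1
  rw [Nat.cast_sum]

open Polynomial in
lemma toOne_monomial {N : ℕ} (x : Fin N → ℂ) (s : Fin N →₀ ℕ) (a : ℂ) :
    toOne x (MvPolynomial.monomial s a)
      = Polynomial.C (a * ∏ i, x i ^ s i) * Polynomial.X ^ (∑ i, s i) := by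
  rw [toOne, MvPolynomial.eval₂Hom_monomial]
  rw [Finsupp.prod_fintype _ _ (fun i => pow_zero _)]
  simp only [mul_pow, ← Polynomial.C_pow]
  rw [Finset.prod_mul_distrib, ← map_prod, Finset.prod_pow_eq_pow_sum, map_mul, mul_assoc]

open Polynomial in
lemma toOne_euler {N : ℕ} (x : Fin N → ℂ) (f : MvPolynomial (Fin N) ℂ) :
    toOne x (euler f) = Polynomial.X * Polynomial.derivative (toOne x f) := by
  induction f using MvPolynomial.induction_on' with
  | monomial s a =>
      rw [euler_monomial, toOne_monomial, toOne_monomial]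
      rcases Nat.eq_zero_or_pos (∑ i, s i) with h | h
      · rw [h]
        simp only [Nat.cast_zero, zero_mul, mul_zero, map_zero, pow_zero, mul_one,
          Polynomial.derivative_C]
      · rw [Polynomial.derivative_C_mul_X_pow, mul_left_comm, ← pow_succ',
          Nat.sub_add_cancel h]
        congr 1
        push_cast
        ring
  | add p q hp hq =>
      have he : euler (p + q) = euler p + euler q := by
        simp [euler, mul_add, Finset.sum_add_distrib]
      rw [he, map_add, map_add, derivative_add, mul_add, hp, hq]

open Polynomial in
noncomputable def theta (Q : Polynomial ℂ) : Polynomial ℂ := Polynomial.X * Polynomial.derivative Q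

open Polynomial in
lemma coeff_theta (Q : Polynomial ℂ) (d : ℕ) : (theta Q).coeff d = d * Q.coeff d := by
  cases d with
  | zero => simp [theta, mul_coeff_zero]
  | succ k => rw [theta, Polynomial.coeff_X_mul, coeff_derivative]; push_cast; ring

open Polynomial in
lemma natDegree_theta_le (Q : Polynomial ℂ) : (theta Q).natDegree ≤ Q.natDegree := by
  rcases eq_or_ne (derivative Q) 0 with h | h
  · simp [theta, h]
  · have h1 : (theta Q).natDegree ≤ 1 + (derivative Q).natDegree := by
      rw [theta]
      exact (natDegree_mul_le).trans (by simp)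
    have h2 : (derivative Q).natDegree ≤ Q.natDegree - 1 := natDegree_derivative_le Q
    have h3 : 1 ≤ Q.natDegree := by
      rcases Nat.eq_zero_or_pos Q.natDegree with h0 | h1
      · exact absurd (by rw [Polynomial.eq_C_of_natDegree_eq_zero h0]; simp) h
      · exact h1
    omega

open Polynomial in
lemma coeff_theta_iter (P : Polynomial ℂ) (k d : ℕ) :
    (theta^[k] P).coeff d = (d : ℂ) ^ k * P.coeff d := by
  induction k with
  | zero => simp
  | succ m ih => rw [Function.iterate_succ_apply', coeff_theta, ih]; ring

open Polynomial in
lemma natDegree_theta_iter_le (P : Polynomial ℂ) (k : ℕ) :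
    (theta^[k] P).natDegree ≤ P.natDegree := by
  induction k with
  | zero => simp
  | succ m ih =>
      rw [Function.iterate_succ_apply']
      exact (natDegree_theta_le _).trans ih

open Polynomial in
lemma eq_zero_of_theta_iter_eval_one (P : Polynomial ℂ)
    (h : ∀ k : ℕ, Polynomial.eval 1 (theta^[k] P) = 0) : P = 0 := by
  set D := P.natDegree with hD
  have hsum : ∀ k : ℕ, ∑ d ∈ Finset.range (D + 1), (d : ℂ) ^ k * P.coeff d = 0 := by
    intro k
    have := h k
    rw [Polynomial.eval_eq_sum_range' (Nat.lt_succ_of_le (natDegree_theta_iter_le P k))] at this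
    simpa [coeff_theta_iter, one_pow] using this
  have hcoeff : ∀ d0 ∈ Finset.range (D + 1), P.coeff d0 = 0 := by
    intro d0 hd0
    set r : Polynomial ℂ := Lagrange.basis (Finset.range (D + 1)) (fun m : ℕ => (m : ℂ)) d0
      with hr
    have key : ∑ d ∈ Finset.range (D + 1), P.coeff d * r.eval (d : ℂ) = 0 := by
      have : ∀ d ∈ Finset.range (D + 1), P.coeff d * r.eval (d : ℂ)
          = ∑ k ∈ Finset.range (r.natDegree + 1), r.coeff k * ((d : ℂ) ^ k * P.coeff d) := by
        intro d _
        rw [Polynomial.eval_eq_sum_range, Finset.mul_sum]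
        exact Finset.sum_congr rfl fun k _ => by ring
      rw [Finset.sum_congr rfl this, Finset.sum_comm]
      refine Finset.sum_eq_zero fun k _ => ?_
      rw [← Finset.mul_sum, hsum k, mul_zero]
    have heval : ∀ d ∈ Finset.range (D + 1), r.eval (d : ℂ)
        = if d = d0 then 1 else 0 := by
      intro d hd
      rcases eq_or_ne d d0 with rfl | hne
      · rw [if_pos rfl]
        exact Lagrange.eval_basis_self
          (Set.InjOn.mono (Set.subset_univ _) (Nat.cast_injective.injOn)) hd0
      · rw [if_neg hne]
        exact Lagrange.eval_basis_of_ne (Ne.symm hne) hd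
    rw [Finset.sum_congr rfl fun d hd => by rw [heval d hd]] at key
    simpa [Finset.sum_ite_eq' (Finset.range (D+1)), Finset.mem_range.mpr
      (Finset.mem_range.mp hd0)] using key
  ext d
  rcases le_or_gt d D with hle | hlt
  · simpa using hcoeff d (Finset.mem_range.mpr (Nat.lt_succ_of_le hle))
  · simp [Polynomial.coeff_eq_zero_of_natDegree_lt hlt]

end Aux


open Bron in
/-- Let `X ⊂ ℂ^N` be an irreducible non-degenerate affine variety
of dimension `n` admitting a local (holomorphic) parametrization
`φ : U ⊆ ℂ^n → X` such that for every `p ∈ U` the vector `φ p` is a linear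
combination of the partial derivatives `∂φ/∂x₁(p), …, ∂φ/∂xₙ(p)`. Then `X` is a
cone whose vertex contains the origin: `X` is stable under the scaling action
centred at the origin of `ℂ^N`. -/
theorem statement0 (n N : ℕ)
    (X : Set (Fin N → ℂ)) (U : Set (Fin n → ℂ)) (φ : (Fin n → ℂ) → (Fin N → ℂ))
    (hXirr : IsIrr ℂ X) (hXcl : IsZar ℂ X)
    (hXnd : Submodule.span ℂ X = ⊤)
    (hXdim : zdim ℂ X = (n : ℕ∞))
    (hUopen : IsOpen U) (hUne : U.Nonempty)
    (hdiff : ∀ p ∈ U, DifferentiableAt ℂ φ p)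
    (him : φ '' U ⊆ X) (hparam : X = zcl ℂ (φ '' U))
    (hlin : ∀ p ∈ U,
      φ p ∈ Submodule.span ℂ (Set.range fun i : Fin n => fderiv ℂ φ p (Pi.single i 1))) :
    ∀ c : ℂ, ∀ x ∈ X, c • x ∈ X := by
  intro c x hx
  have master : ∀ f : MvPolynomial (Fin N) ℂ, (∀ y ∈ X, MvPolynomial.eval y f = 0) →
      MvPolynomial.eval (c • x) f = 0 := by
    intro f hf
    have hstab : ∀ g : MvPolynomial (Fin N) ℂ, (∀ y ∈ X, MvPolynomial.eval y g = 0) →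
        ∀ y ∈ X, MvPolynomial.eval y (euler g) = 0 := by
      intro g hg y hy
      have hU : ∀ p ∈ U, MvPolynomial.eval (φ p) (euler g) = 0 :=
        fun p hp => euler_vanishes_at_param U φ hUopen hdiff hlin g
          (fun q hq => hg _ (him ⟨q, hq, rfl⟩)) p hp
      have hyz : y ∈ Bron.zcl ℂ (φ '' U) := hparam ▸ hy
      have hmem : y ∈ {z : Fin N → ℂ | ∀ h ∈ ({euler g} : Set (MvPolynomial (Fin N) ℂ)),
          MvPolynomial.eval z h = 0} := by
        refine Set.mem_sInter.mp hyz _ ⟨⟨{euler g}, rfl⟩, ?_⟩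
        rintro - ⟨p, hp, rfl⟩ h hh
        rw [Set.mem_singleton_iff] at hh
        subst hh
        exact hU p hp
      exact hmem (euler g) rfl
    have hiter : ∀ k : ℕ, ∀ y ∈ X, MvPolynomial.eval y (euler^[k] f) = 0 := by
      intro k
      induction k with
      | zero => simpa using hf
      | succ m ih =>
          intro y hy
          rw [Function.iterate_succ_apply']
          exact hstab _ ih y hy
    have htoOne : ∀ k : ℕ, theta^[k] (toOne x f) = toOne x (euler^[k] f) := by
      intro k
      induction k with
      | zero => rfl
      | succ m ih =>
          rw [Function.iterate_succ_apply', Function.iterate_succ_apply', ih, theta,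
            toOne_euler]
    have hzero : toOne x f = 0 := by
      apply eq_zero_of_theta_iter_eval_one
      intro k
      rw [htoOne k, toOne_eval, one_smul]
      exact hiter k x hx
    rw [← toOne_eval, hzero, Polynomial.eval_zero]
  obtain ⟨T, hT⟩ := hXcl
  rw [hT]
  intro f hfT
  exact master f fun y hy => by rw [hT] at hy; exact hy f hfT
end

section
/- Let Λ₁,…,Λ_h ⊂ ℙ^{hr−1} be (r−1)-planes spanning the whole space. If two distinct (h−1)-planes Λ, Γ both pass through a point p and each intersects every Λ_i in a point, then the span H = ⟨Λ, Γ⟩ has dimension at most 2(h−1) and H intersects at least one Λ_i in a subspace of dimension at least 1. -/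
open Module Submodule

lemma finset_sup_finrank_le {K V : Type} [Field K] [AddCommGroup V] [Module K V]
    [FiniteDimensional K V] {ι : Type} (W : ι → Submodule K V) (s : Finset ι) :
    Module.finrank K ↥(s.sup W) ≤ ∑ i ∈ s, Module.finrank K (W i) := by
  classical
  induction s using Finset.induction with
  | empty => simp
  | @insert a s hns ih =>
    rw [Finset.sup_insert, Finset.sum_insert hns]
    have := Submodule.finrank_sup_add_finrank_inf_eq (W a) (s.sup W)
    omega

/-- (Uniqueness part of the span lemma.) In a `hr`-dimensional
vector space (the cone over `ℙ^{hr-1}`), let `W 1, …, W h` be `r`-dimensional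
subspaces (cones over `(r-1)`-planes) spanning the whole space. If two distinct
`h`-dimensional subspaces `Λ, Γ` (cones over distinct `(h-1)`-planes) both contain
a nonzero vector `p` and each meets every `W i` nontrivially, then their span
`H = Λ ⊔ Γ` has dimension at most `2h - 1` (projective dimension at most
`2(h-1)`), and `H` meets at least one `W i` in a subspace of dimension at least
`2` (projective dimension at least `1`). -/
theorem statement3 {K V : Type} [Field K] [AddCommGroup V] [Module K V]
    [FiniteDimensional K V] (h r : ℕ)
    (hdimV : Module.finrank K V = h * r)
    (W : Fin h → Submodule K V)
    (hdimW : ∀ i, Module.finrank K (W i) = r)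
    (hsup : ⨆ i, W i = ⊤)
    (Λ Γ : Submodule K V) (hΛΓ : Λ ≠ Γ)
    (hΛ : Module.finrank K Λ = h) (hΓ : Module.finrank K Γ = h)
    (p : V) (hp : p ≠ 0) (hpΛ : p ∈ Λ) (hpΓ : p ∈ Γ)
    (hmeet : ∀ i, Λ ⊓ W i ≠ ⊥ ∧ Γ ⊓ W i ≠ ⊥) :
    Module.finrank K (Λ ⊔ Γ : Submodule K V) ≤ 2 * h - 1 ∧
    ∃ i, 2 ≤ Module.finrank K ((Λ ⊔ Γ) ⊓ W i : Submodule K V) := by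
  classical
  -- Part 1
  have hinf : 1 ≤ Module.finrank K (Λ ⊓ Γ : Submodule K V) := by
    rw [Nat.one_le_iff_ne_zero, ← Nat.pos_iff_ne_zero, Module.finrank_pos_iff_exists_ne_zero]
    exact ⟨⟨p, ⟨hpΛ, hpΓ⟩⟩, fun hc => hp (by simpa using congrArg Subtype.val hc)⟩
  have hkey := Submodule.finrank_sup_add_finrank_inf_eq Λ Γ
  constructor
  · omega
  -- Part 2
  by_contra hcon
  push_neg at hcon
  -- W is an independent family
  have hindep : iSupIndep W := by
    rw [iSupIndep_def]
    intro i
    have heq : (⨆ j, ⨆ _ : j ≠ i, W j) = (Finset.univ.erase i).sup W := by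
      rw [Finset.sup_eq_iSup]
      exact iSup_congr fun j => by simp [Finset.mem_erase]
    have h1 : Module.finrank K ↥((Finset.univ.erase i).sup W) ≤ (h - 1) * r := by
      calc Module.finrank K ↥((Finset.univ.erase i).sup W)
          ≤ ∑ j ∈ Finset.univ.erase i, Module.finrank K (W j) :=
            finset_sup_finrank_le W _
        _ = (h - 1) * r := by
            simp [hdimW, Finset.card_erase_of_mem (Finset.mem_univ i)]
    have htop : W i ⊔ (⨆ j, ⨆ _ : j ≠ i, W j) = ⊤ := by
      rw [← hsup]
      apply le_antisymm
      · exact sup_le (le_iSup W i) (iSup_le fun j => iSup_le fun _ => le_iSup W j)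
      · exact iSup_le fun j => by
          by_cases hj : j = i
          · subst hj; exact le_sup_left
          · exact le_trans (le_iSup₂ (f := fun j (_ : j ≠ i) => W j) j hj) le_sup_right
    have hh : 1 ≤ h := i.pos
    have hk2 := Submodule.finrank_sup_add_finrank_inf_eq (W i) (⨆ j, ⨆ _ : j ≠ i, W j)
    rw [htop, finrank_top, hdimV] at hk2
    rw [heq] at hk2 ⊢
    have hinf0 : Module.finrank K (W i ⊓ (Finset.univ.erase i).sup W : Submodule K V) = 0 := by
      have := hdimW i
      have hmul : h * r = r + (h - 1) * r := by
        obtain ⟨k, rfl⟩ := Nat.exists_eq_add_of_le hh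
        simp [add_mul, Nat.add_sub_cancel_left]
      omega
    rw [Submodule.finrank_eq_zero] at hinf0
    exact disjoint_iff.mpr hinf0
  -- choose nonzero vectors
  have hv : ∀ i : Fin h, ∃ v : V, v ∈ Λ ⊓ W i ∧ v ≠ 0 := by
    intro i
    obtain ⟨v, hv, hvne⟩ := Submodule.exists_mem_ne_zero_of_ne_bot (hmeet i).1
    exact ⟨v, hv, hvne⟩
  have hw : ∀ i : Fin h, ∃ w : V, w ∈ Γ ⊓ W i ∧ w ≠ 0 := by
    intro i
    obtain ⟨w, hwm, hwne⟩ := Submodule.exists_mem_ne_zero_of_ne_bot (hmeet i).2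
    exact ⟨w, hwm, hwne⟩
  choose v hvm hvne using hv
  choose w hwm hwne using hw
  -- each w i lies in Λ
  have hwΛ : ∀ i, w i ∈ Λ := by
    intro i
    have hle : span K {v i} ≤ (Λ ⊔ Γ) ⊓ W i := by
      rw [Submodule.span_le, Set.singleton_subset_iff]
      exact ⟨le_sup_left (a := Λ) (hvm i).1, (hvm i).2⟩
    have h1 : Module.finrank K (span K {v i}) = 1 := finrank_span_singleton (hvne i)
    have heq : span K {v i} = (Λ ⊔ Γ) ⊓ W i := by
      apply Submodule.eq_of_le_of_finrank_le hle
      rw [h1]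
      exact Nat.lt_succ_iff.mp (hcon i)
    have hwin : w i ∈ span K {v i} := by
      rw [heq]
      exact ⟨le_sup_right (a := Λ) (hwm i).1, (hwm i).2⟩
    obtain ⟨c, hc⟩ := Submodule.mem_span_singleton.mp hwin
    rw [← hc]
    exact Submodule.smul_mem _ _ (hvm i).1
  -- w is linearly independent, spans Γ
  have hli : LinearIndependent K w :=
    hindep.linearIndependent W (fun i => (hwm i).2) hwne
  have hspan : span K (Set.range w) = Γ := by
    apply Submodule.eq_of_le_of_finrank_le
    · rw [Submodule.span_le, Set.range_subset_iff]
      exact fun i => (hwm i).1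
    · rw [hΓ, finrank_span_eq_card hli]
      simp
  have hΓΛ : Γ ≤ Λ := by
    rw [← hspan, Submodule.span_le, Set.range_subset_iff]
    exact hwΛ
  exact hΛΓ (Submodule.eq_of_le_of_finrank_le hΓΛ (by omega)).symm
end
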